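/- arXiv:1807.06007 — 2 statements merged into one kernel-verified Lean document; each statement's English description precedes it below -/
import Mathlib

section
/- (Exactness of the Lebesgue quadrature, Theorem 1.) Let (ψ_i, λ_i) be a Lebesgue eigenbasis for (μ, f, n) and let P be a real polynomial of degree ≤ 2n−2 written as a finite sum P(x) = Σ_{m=1}^{M} A_m(x) B_m(x) with each A_m, B_m a real polynomial of degree ≤ n−1. Then ∫ P(x) f(x) dμ(x) = Σ_{i=0}^{n−1} λ_i w_P^[i], where w_P^[i] = Σ_{m=1}^{M} (∫ A_m ψ_i dμ)(∫ B_m ψ_i dμ). -/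
open MeasureTheory Polynomial

/-- A Lebesgue eigenbasis for `(μ, f, n)`: real polynomials `ψ i` of degree `≤ n-1`
and reals `lam i` with `∫ ψ i ψ j dμ = δ_{ij}` and `∫ ψ i ψ j f dμ = lam i δ_{ij}`. -/
def LebesgueEigenbasis (μ : Measure ℝ) (f : ℝ → ℝ) (n : ℕ)
    (ψ : Fin n → Polynomial ℝ) (lam : Fin n → ℝ) : Prop :=
  (∀ i, (ψ i).natDegree ≤ n - 1) ∧
  (∀ i j, (∫ x, (ψ i).eval x * (ψ j).eval x ∂μ) = if i = j then 1 else 0) ∧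
  (∀ i j, (∫ x, (ψ i).eval x * (ψ j).eval x * f x ∂μ) = if i = j then lam i else 0)

/-!
The `n` orthonormal polynomials `ψ i` are linearly independent in the `n`-dimensional space of
polynomials of degree `< n`, hence a basis of it, and every `A` of degree `≤ n - 1` has the
expansion `A = ∑ i, (∫ A ψ i dμ) • ψ i`. Expanding both factors of each product `A_m B_m` and
integrating against `f` term by term, the off-diagonal terms vanish and the diagonal term
`(i, i)` contributes `λ_i (∫ A_m ψ_i dμ) (∫ B_m ψ_i dμ)`.
-/

namespace Polynomial

theorem mem_degreeLT_of_natDegree_le_pred {n : ℕ} (hn : 1 ≤ n) {p : ℝ[X]}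
    (hp : p.natDegree ≤ n - 1) : p ∈ degreeLT ℝ n := by
  obtain ⟨k, rfl⟩ := Nat.exists_eq_add_of_le' hn
  rw [degreeLT_succ_eq_degreeLE, mem_degreeLE]
  exact degree_le_of_natDegree_le hp

theorem integrable_eval_mul_of_natDegree_le {μ : Measure ℝ} {g : ℝ → ℝ} {d : ℕ}
    (hg : ∀ m ≤ d, Integrable (fun x => g x * x ^ m) μ) {p : ℝ[X]} (hp : p.natDegree ≤ d) :
    Integrable (fun x => p.eval x * g x) μ := by
  have hsum : (fun x => p.eval x * g x)
      = fun x => ∑ k ∈ Finset.range (d + 1), p.coeff k * (g x * x ^ k) := by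
    funext x
    rw [eval_eq_sum_range' (Nat.lt_succ_of_le hp), Finset.sum_mul]
    exact Finset.sum_congr rfl fun k _ => by ring
  rw [hsum]
  exact integrable_finsetSum _ fun k hk =>
    (hg k (Nat.lt_succ_iff.mp (Finset.mem_range.mp hk))).const_mul _

theorem integrable_eval_of_integrable_abs_pow {μ : Measure ℝ}
    (hmom : ∀ k : ℕ, Integrable (fun x => |x| ^ k) μ) (p : ℝ[X]) :
    Integrable (fun x => p.eval x) μ := by
  have hpow (k : ℕ) : Integrable (fun x : ℝ => x ^ k) μ :=
    (hmom k).mono' (by fun_prop) (ae_of_all _ fun x => by simp)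
  simpa using
    integrable_eval_mul_of_natDegree_le (g := 1) (fun m _ => by simpa using hpow m) le_rfl

theorem integrable_eval_mul_eval_mul_of_natDegree_add_le {μ : Measure ℝ} {g : ℝ → ℝ} {d : ℕ}
    (hg : ∀ m ≤ d, Integrable (fun x => g x * x ^ m) μ) {p q : ℝ[X]}
    (hpq : p.natDegree + q.natDegree ≤ d) :
    Integrable (fun x => p.eval x * (q.eval x * g x)) μ := by
  simpa only [eval_mul, mul_assoc] using
    integrable_eval_mul_of_natDegree_le hg (natDegree_mul_le.trans hpq)

theorem integral_sum_smul_eval_mul {μ : Measure ℝ} {ι : Type*} [Fintype ι] {ψ : ι → ℝ[X]}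
    {h : ℝ → ℝ} (hint : ∀ i, Integrable (fun x => (ψ i).eval x * h x) μ) (a : ι → ℝ) :
    ∫ x, (∑ i, a i • ψ i).eval x * h x ∂μ = ∑ i, a i * ∫ x, (ψ i).eval x * h x ∂μ := by
  simp only [eval_finsetSum, eval_smul, smul_eq_mul, Finset.sum_mul, mul_assoc]
  rw [integral_finsetSum _ fun i _ => (hint i).const_mul (a i)]
  simp only [integral_const_mul]

section Orthonormal

variable {μ : Measure ℝ} {n : ℕ} {ψ : Fin n → ℝ[X]}
  (hmom : ∀ k : ℕ, Integrable (fun x => |x| ^ k) μ)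
  (horth : ∀ i j, ∫ x, (ψ i).eval x * (ψ j).eval x ∂μ = if i = j then 1 else 0)
include hmom horth

theorem integral_sum_smul_mul_eval (a : Fin n → ℝ) (j : Fin n) :
    ∫ x, (∑ i, a i • ψ i).eval x * (ψ j).eval x ∂μ = a j := by
  rw [integral_sum_smul_eval_mul
    (fun i => by simpa using integrable_eval_of_integrable_abs_pow hmom (ψ i * ψ j))]
  simp [horth]

theorem linearIndependent_of_integral_orthonormal : LinearIndependent ℝ ψ := by
  refine Fintype.linearIndependent_iff.mpr fun a ha j => ?_
  simpa [ha] using (integral_sum_smul_mul_eval hmom horth a j).symm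

theorem span_range_eq_degreeLT_of_integral_orthonormal (hψ : ∀ i, ψ i ∈ degreeLT ℝ n) :
    Submodule.span ℝ (Set.range ψ) = degreeLT ℝ n := by
  refine Submodule.eq_of_le_of_finrank_eq
    (Submodule.span_le.mpr (Set.range_subset_iff.mpr hψ)) ?_
  rw [finrank_span_eq_card (linearIndependent_of_integral_orthonormal hmom horth),
    (degreeLTEquiv ℝ n).finrank_eq, Module.finrank_fin_fun, Fintype.card_fin]

theorem eq_sum_integral_mul_eval_smul (hψ : ∀ i, ψ i ∈ degreeLT ℝ n) {A : ℝ[X]}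
    (hA : A ∈ degreeLT ℝ n) : A = ∑ i, (∫ x, A.eval x * (ψ i).eval x ∂μ) • ψ i := by
  rw [← span_range_eq_degreeLT_of_integral_orthonormal hmom horth hψ,
    Submodule.mem_span_range_iff_exists_fun] at hA
  obtain ⟨a, rfl⟩ := hA
  simp only [integral_sum_smul_mul_eval hmom horth]

end Orthonormal

end Polynomial

namespace LebesgueEigenbasis

variable {μ : Measure ℝ} {f : ℝ → ℝ} {n : ℕ} {ψ : Fin n → ℝ[X]} {lam : Fin n → ℝ}

theorem integral_eval_mul_eval_mul (heb : LebesgueEigenbasis μ f n ψ lam) (hn : 1 ≤ n)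
    (hmom : ∀ k : ℕ, Integrable (fun x => |x| ^ k) μ)
    (hfint : ∀ m ≤ 2 * n - 2, Integrable (fun x => f x * x ^ m) μ)
    {A B : ℝ[X]} (hA : A.natDegree ≤ n - 1) (hB : B.natDegree ≤ n - 1) :
    ∫ x, A.eval x * (B.eval x * f x) ∂μ =
      ∑ i, lam i * ((∫ x, A.eval x * (ψ i).eval x ∂μ) * ∫ x, B.eval x * (ψ i).eval x ∂μ) := by
  obtain ⟨hdeg, horth, hdiag⟩ := heb
  have hψ i := mem_degreeLT_of_natDegree_le_pred hn (hdeg i)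
  have hint {p q : ℝ[X]} (hp : p.natDegree ≤ n - 1) (hq : q.natDegree ≤ n - 1) :
      Integrable (fun x => p.eval x * (q.eval x * f x)) μ :=
    integrable_eval_mul_eval_mul_of_natDegree_add_le hfint (by omega)
  set a := fun i => ∫ x, A.eval x * (ψ i).eval x ∂μ
  set b := fun i => ∫ x, B.eval x * (ψ i).eval x ∂μ
  have hAexp : A = ∑ i, a i • ψ i :=
    eq_sum_integral_mul_eval_smul hmom horth hψ (mem_degreeLT_of_natDegree_le_pred hn hA)
  have hBexp : B = ∑ i, b i • ψ i :=
    eq_sum_integral_mul_eval_smul hmom horth hψ (mem_degreeLT_of_natDegree_le_pred hn hB)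
  calc ∫ x, A.eval x * (B.eval x * f x) ∂μ
      = ∑ i, a i * ∫ x, (ψ i).eval x * (B.eval x * f x) ∂μ := by
        rw [hAexp]
        exact integral_sum_smul_eval_mul (fun i => hint (hdeg i) hB) a
    _ = ∑ i, a i * ∫ x, B.eval x * ((ψ i).eval x * f x) ∂μ := by simp_rw [mul_left_comm]
    _ = ∑ i, a i * ∑ j, b j * ∫ x, (ψ j).eval x * ((ψ i).eval x * f x) ∂μ := by
        rw [hBexp]
        simp_rw [integral_sum_smul_eval_mul (fun j => hint (hdeg j) (hdeg _)) b]
    _ = ∑ i, lam i * (a i * b i) := by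
        simp only [← mul_assoc, hdiag, mul_ite, mul_zero, Finset.sum_ite_eq', Finset.mem_univ,
          if_true]
        exact Finset.sum_congr rfl fun i _ => by ring

end LebesgueEigenbasis

theorem lebesgue_quadrature_exactness_general (n : ℕ) (hn : 1 ≤ n) (μ : Measure ℝ)
    (hmom : ∀ k : ℕ, Integrable (fun x => |x| ^ k) μ)
    (f : ℝ → ℝ)
    (hfint : ∀ m ≤ 2 * n - 2, Integrable (fun x => f x * x ^ m) μ)
    (ψ : Fin n → Polynomial ℝ) (lam : Fin n → ℝ)
    (heb : LebesgueEigenbasis μ f n ψ lam)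
    (P : Polynomial ℝ)
    (M : ℕ) (A B : Fin M → Polynomial ℝ)
    (hA : ∀ m, (A m).natDegree ≤ n - 1) (hB : ∀ m, (B m).natDegree ≤ n - 1)
    (hP : P = ∑ m, A m * B m) :
    (∫ x, P.eval x * f x ∂μ) =
      ∑ i, lam i *
        (∑ m, (∫ x, (A m).eval x * (ψ i).eval x ∂μ) * (∫ x, (B m).eval x * (ψ i).eval x ∂μ)) := by
  subst hP
  have hsplit : ∫ x, (∑ m, A m * B m).eval x * f x ∂μ
      = ∑ m, ∫ x, (A m).eval x * ((B m).eval x * f x) ∂μ := by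
    simp only [eval_finsetSum, eval_mul, Finset.sum_mul, mul_assoc]
    exact integral_finsetSum _ fun m _ =>
      integrable_eval_mul_eval_mul_of_natDegree_add_le hfint (by have := hA m; have := hB m; omega)
  simp only [hsplit, heb.integral_eval_mul_eval_mul hn hmom hfint (hA _) (hB _), Finset.mul_sum]
  exact Finset.sum_comm

/-- Theorem 1: exactness of the Lebesgue quadrature for
`∫ P f dμ` with `P` of degree `≤ 2n-2` written as `P = Σ_m A_m B_m`. -/
theorem lebesgue_quadrature_exactness (n : ℕ) (hn : 1 ≤ n) (μ : Measure ℝ)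
    (hmom : ∀ k : ℕ, Integrable (fun x => |x| ^ k) μ)
    (hgram : (Matrix.of fun j k : Fin n => ∫ x, x ^ ((j : ℕ) + (k : ℕ)) ∂μ).PosDef)
    (f : ℝ → ℝ) (hf : Measurable f)
    (hfint : ∀ m ≤ 2 * n - 2, Integrable (fun x => f x * x ^ m) μ)
    (ψ : Fin n → Polynomial ℝ) (lam : Fin n → ℝ)
    (heb : LebesgueEigenbasis μ f n ψ lam)
    (P : Polynomial ℝ) (hPdeg : P.natDegree ≤ 2 * n - 2)
    (M : ℕ) (A B : Fin M → Polynomial ℝ)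
    (hA : ∀ m, (A m).natDegree ≤ n - 1) (hB : ∀ m, (B m).natDegree ≤ n - 1)
    (hP : P = ∑ m, A m * B m) :
    (∫ x, P.eval x * f x ∂μ) =
      ∑ i, lam i *
        (∑ m, (∫ x, (A m).eval x * (ψ i).eval x ∂μ) * (∫ x, (B m).eval x * (ψ i).eval x ∂μ)) :=
  lebesgue_quadrature_exactness_general n hn μ hmom f hfint ψ lam heb P M A B hA hB hP
end

section
/- (Principal components expansion of the least-squares residual.) Suppose additionally ∫ f² dμ < ∞, and let f_LS denote the orthogonal projection in L²(μ) of f onto the linear span of 1, x, …, x^{n−1}. Then for every Lebesgue eigenbasis (ψ_i, λ_i) for (μ, f, n): ∫ (f − f_LS)² dμ = ∫ f² dμ − Σ_{i=0}^{n−1} λ_i² w^[i], where w^[i] = (∫ ψ_i dμ)². -/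
/-!
The polynomials `ψ i` are orthonormal in `L²(μ)`, hence linearly independent, and there are `n` of
them in the `n`-dimensional space of polynomials of degree `< n`: they form a basis. Expanding
`1 = ∑ dᵢ ψᵢ` gives `dᵢ = ∫ ψᵢ dμ` and `⟨f, ψⱼ⟩ = ∫ f ψⱼ · 1 dμ = dⱼ λⱼ`, while expanding
`f_LS = ∑ cᵢ ψᵢ` and using that `f - f_LS` is orthogonal to every `ψⱼ` gives `cⱼ = ⟨f, ψⱼ⟩`.
Pythagoras then yields `‖f - f_LS‖² = ‖f‖² - ⟨f, f_LS⟩ = ‖f‖² - ∑ (dⱼ λⱼ)²`.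
-/

open MeasureTheory Polynomial

lemma Polynomial.mem_degreeLT_of_natDegree_lt {R : Type*} [Semiring R] {n : ℕ} {p : R[X]}
    (h : p.natDegree < n) : p ∈ degreeLT R n :=
  mem_degreeLT.mpr (degree_le_natDegree.trans_lt (by exact_mod_cast h))

lemma Polynomial.span_range_eq_degreeLT {K ι : Type*} [Field K] [Fintype ι] {n : ℕ}
    {ψ : ι → K[X]} (hψ : LinearIndependent K ψ) (hcard : Fintype.card ι = n)
    (hdeg : ∀ i, ψ i ∈ degreeLT K n) :
    Submodule.span K (Set.range ψ) = degreeLT K n :=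
  Submodule.eq_of_le_of_finrank_eq (Submodule.span_le.mpr (Set.range_subset_iff.mpr hdeg))
    (by rw [finrank_span_eq_card hψ, hcard, Module.finrank_eq_card_basis (degreeLT.basis K n),
      Fintype.card_fin])

section Integrals

variable {μ : Measure ℝ}

lemma integrable_pow_of_integrable_abs_pow {k : ℕ} (h : Integrable (fun x => |x| ^ k) μ) :
    Integrable (fun x : ℝ => x ^ k) μ :=
  h.mono' (by fun_prop) (ae_of_all _ fun x => by simp)

lemma Polynomial.integrable_mul_eval {g : ℝ → ℝ} {p : ℝ[X]}
    (h : ∀ k ≤ p.natDegree, Integrable (fun x => g x * x ^ k) μ) :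
    Integrable (fun x => g x * p.eval x) μ := by
  simp_rw [eval_eq_sum_range, Finset.mul_sum]
  refine integrable_finsetSum _ fun k hk => ?_
  simpa only [mul_left_comm] using
    (h k (Nat.lt_succ_iff.mp (Finset.mem_range.mp hk))).const_mul (p.coeff k)

lemma Polynomial.integrable_eval (p : ℝ[X]) (h : ∀ k, Integrable (fun x : ℝ => x ^ k) μ) :
    Integrable (fun x => p.eval x) μ := by
  simpa using integrable_mul_eval (g := 1) (p := p) fun k _ => by simpa using h k

lemma Polynomial.integrable_eval_mul_eval (hmom : ∀ k : ℕ, Integrable (fun x => |x| ^ k) μ)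
    (p q : ℝ[X]) : Integrable (fun x => p.eval x * q.eval x) μ := by
  simpa using (p * q).integrable_eval fun k => integrable_pow_of_integrable_abs_pow (hmom k)

lemma Polynomial.integral_sum_smul_eval_mul_s12 {ι : Type*} [Fintype ι] (c : ι → ℝ) {ψ : ι → ℝ[X]}
    {g : ℝ → ℝ} (hint : ∀ i, Integrable (fun x => (ψ i).eval x * g x) μ) :
    ∫ x, (∑ i, c i • ψ i).eval x * g x ∂μ = ∑ i, c i * ∫ x, (ψ i).eval x * g x ∂μ := by
  simp_rw [eval_finsetSum, eval_smul, smul_eq_mul, Finset.sum_mul, mul_assoc]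
  rw [integral_finsetSum _ fun i _ => (hint i).const_mul (c i)]
  simp_rw [integral_const_mul]

section Orthonormal

variable {ι : Type*} [Fintype ι] [DecidableEq ι] {ψ : ι → ℝ[X]}

lemma Polynomial.integral_sum_smul_eval_mul_eval_of_orthonormal
    (hint : ∀ i j, Integrable (fun x => (ψ i).eval x * (ψ j).eval x) μ)
    (hO : ∀ i j, ∫ x, (ψ i).eval x * (ψ j).eval x ∂μ = if i = j then 1 else 0)
    (c : ι → ℝ) (j : ι) :
    ∫ x, (∑ i, c i • ψ i).eval x * (ψ j).eval x ∂μ = c j := by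
  simp [integral_sum_smul_eval_mul_s12 c fun i => hint i j, hO]

lemma Polynomial.linearIndependent_of_orthonormal
    (hint : ∀ i j, Integrable (fun x => (ψ i).eval x * (ψ j).eval x) μ)
    (hO : ∀ i j, ∫ x, (ψ i).eval x * (ψ j).eval x ∂μ = if i = j then 1 else 0) :
    LinearIndependent ℝ ψ :=
  Fintype.linearIndependent_iff.mpr fun c hc j => by
    simpa [hc, eq_comm] using integral_sum_smul_eval_mul_eval_of_orthonormal hint hO c j

end Orthonormal

lemma integral_sub_sq_of_integral_sub_mul_eq_zero {f g : ℝ → ℝ}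
    (hf : Integrable (fun x => f x ^ 2) μ) (hfg : Integrable (fun x => f x * g x) μ)
    (hg : Integrable (fun x => g x * g x) μ) (horth : ∫ x, (f x - g x) * g x ∂μ = 0) :
    ∫ x, (f x - g x) ^ 2 ∂μ = ∫ x, f x ^ 2 ∂μ - ∫ x, f x * g x ∂μ := by
  have hres : Integrable (fun x => (f x - g x) * g x) μ := by
    refine (hfg.sub hg).congr (ae_of_all _ fun x => ?_)
    simp only [Pi.sub_apply, sub_mul]
  have hdiff : Integrable (fun x => f x ^ 2 - f x * g x) μ := hf.sub hfg
  calc ∫ x, (f x - g x) ^ 2 ∂μ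
      = ∫ x, (f x ^ 2 - f x * g x) - (f x - g x) * g x ∂μ := by congr 1; ext x; ring
    _ = ∫ x, f x ^ 2 ∂μ - ∫ x, f x * g x ∂μ := by
      rw [integral_sub hdiff hres, integral_sub hf hfg, horth, sub_zero]

end Integrals

namespace LebesgueEigenbasis

variable {μ : Measure ℝ} {f : ℝ → ℝ} {n : ℕ} {ψ : Fin n → ℝ[X]} {lam : Fin n → ℝ}

lemma integral_sum_smul_eval_mul_eval (heb : LebesgueEigenbasis μ f n ψ lam)
    (hmom : ∀ k : ℕ, Integrable (fun x => |x| ^ k) μ) (c : Fin n → ℝ) (j : Fin n) :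
    ∫ x, (∑ i, c i • ψ i).eval x * (ψ j).eval x ∂μ = c j :=
  integral_sum_smul_eval_mul_eval_of_orthonormal
    (fun i j => integrable_eval_mul_eval hmom (ψ i) (ψ j)) heb.2.1 c j

lemma exists_sum_smul_eq (heb : LebesgueEigenbasis μ f n ψ lam) (hn : 1 ≤ n)
    (hmom : ∀ k : ℕ, Integrable (fun x => |x| ^ k) μ) {p : ℝ[X]} (hp : p.natDegree ≤ n - 1) :
    ∃ c : Fin n → ℝ, ∑ i, c i • ψ i = p := by
  have hψ : LinearIndependent ℝ ψ :=
    linearIndependent_of_orthonormal (fun i j => integrable_eval_mul_eval hmom (ψ i) (ψ j)) heb.2.1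
  rw [← Submodule.mem_span_range_iff_exists_fun, span_range_eq_degreeLT hψ (Fintype.card_fin n)
    fun i => mem_degreeLT_of_natDegree_lt (by grind [heb.1 i])]
  exact mem_degreeLT_of_natDegree_lt (by omega)

lemma integral_eval_mul (heb : LebesgueEigenbasis μ f n ψ lam) (hn : 1 ≤ n)
    (hmom : ∀ k : ℕ, Integrable (fun x => |x| ^ k) μ)
    (hfint : ∀ m ≤ 2 * n - 2, Integrable (fun x => f x * x ^ m) μ) (j : Fin n) :
    ∫ x, (ψ j).eval x * f x ∂μ = lam j * ∫ x, (ψ j).eval x ∂μ := by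
  obtain ⟨d, hd⟩ := heb.exists_sum_smul_eq hn hmom (p := 1) (by simp)
  have hψψf (i) : Integrable (fun x => (ψ i).eval x * ((ψ j).eval x * f x)) μ := by
    refine (integrable_mul_eval (p := ψ i * ψ j) fun k hk => hfint k
      (hk.trans (natDegree_mul_le.trans (by grind [heb.1 i, heb.1 j])))).congr
      (ae_of_all _ fun x => ?_)
    simp only [eval_mul]
    ring
  have hψ_integral : ∫ x, (ψ j).eval x ∂μ = d j := by
    simpa [hd] using heb.integral_sum_smul_eval_mul_eval hmom d j
  have hexpand := integral_sum_smul_eval_mul_s12 d hψψf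
  simp only [hd, eval_one, one_mul, ← mul_assoc, heb.2.2] at hexpand
  simpa [hψ_integral, mul_comm] using hexpand

end LebesgueEigenbasis

theorem least_squares_residual_pca_general (n : ℕ) (hn : 1 ≤ n) (μ : Measure ℝ)
    (hmom : ∀ k : ℕ, Integrable (fun x => |x| ^ k) μ)
    (f : ℝ → ℝ)
    (hfint : ∀ m ≤ 2 * n - 2, Integrable (fun x => f x * x ^ m) μ)
    (ψ : Fin n → Polynomial ℝ) (lam : Fin n → ℝ)
    (heb : LebesgueEigenbasis μ f n ψ lam)
    (hf2 : Integrable (fun x => (f x) ^ 2) μ)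
    (fLS : Polynomial ℝ) (hLSdeg : fLS.natDegree ≤ n - 1)
    (hLSproj : ∀ q : Polynomial ℝ, q.natDegree ≤ n - 1 →
      (∫ x, (f x - fLS.eval x) * q.eval x ∂μ) = 0) :
    (∫ x, (f x - fLS.eval x) ^ 2 ∂μ) =
      (∫ x, (f x) ^ 2 ∂μ) - ∑ i, (lam i) ^ 2 * (∫ x, (ψ i).eval x ∂μ) ^ 2 := by
  have hfψ (i) : Integrable (fun x => (ψ i).eval x * f x) μ := by
    simpa only [mul_comm] using
      integrable_mul_eval fun k hk => hfint k (hk.trans (by grind [heb.1 i]))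
  obtain ⟨c, hc⟩ := heb.exists_sum_smul_eq hn hmom hLSdeg
  have hc_eq (j) : c j = ∫ x, (ψ j).eval x * f x ∂μ := by
    have hLSψ := heb.integral_sum_smul_eval_mul_eval hmom c j
    rw [hc] at hLSψ
    have hproj : ∫ x, (f x - fLS.eval x) * (ψ j).eval x ∂μ
        = ∫ x, (ψ j).eval x * f x ∂μ - ∫ x, fLS.eval x * (ψ j).eval x ∂μ := by
      rw [← integral_sub (hfψ j) (integrable_eval_mul_eval hmom fLS (ψ j))]
      congr 1; ext x; ring
    linarith [hLSproj (ψ j) (heb.1 j)]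
  have hffLS : ∫ x, f x * fLS.eval x ∂μ = ∑ j, c j * ∫ x, (ψ j).eval x * f x ∂μ := by
    rw [← integral_sum_smul_eval_mul_s12 c hfψ, hc]
    congr 1; ext x; ring
  rw [integral_sub_sq_of_integral_sub_mul_eq_zero hf2
    (integrable_mul_eval fun k hk => hfint k (by omega))
    (integrable_eval_mul_eval hmom fLS fLS) (hLSproj fLS hLSdeg), hffLS]
  congr 1
  refine Finset.sum_congr rfl fun j _ => ?_
  rw [hc_eq, heb.integral_eval_mul hn hmom hfint]
  ring

/-- principal components expansion of the least-squares residual. -/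
theorem least_squares_residual_pca (n : ℕ) (hn : 1 ≤ n) (μ : Measure ℝ)
    (hmom : ∀ k : ℕ, Integrable (fun x => |x| ^ k) μ)
    (hgram : (Matrix.of fun j k : Fin n => ∫ x, x ^ ((j : ℕ) + (k : ℕ)) ∂μ).PosDef)
    (f : ℝ → ℝ) (hf : Measurable f)
    (hfint : ∀ m ≤ 2 * n - 2, Integrable (fun x => f x * x ^ m) μ)
    (ψ : Fin n → Polynomial ℝ) (lam : Fin n → ℝ)
    (heb : LebesgueEigenbasis μ f n ψ lam)
    (hf2 : Integrable (fun x => (f x) ^ 2) μ)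
    (fLS : Polynomial ℝ) (hLSdeg : fLS.natDegree ≤ n - 1)
    (hLSproj : ∀ q : Polynomial ℝ, q.natDegree ≤ n - 1 →
      (∫ x, (f x - fLS.eval x) * q.eval x ∂μ) = 0) :
    (∫ x, (f x - fLS.eval x) ^ 2 ∂μ) =
      (∫ x, (f x) ^ 2 ∂μ) - ∑ i, (lam i) ^ 2 * (∫ x, (ψ i).eval x ∂μ) ^ 2 :=
  least_squares_residual_pca_general n hn μ hmom f hfint ψ lam heb hf2 fLS hLSdeg hLSproj
end
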